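/- arXiv:1006.1133 — 3 statements merged into one kernel-verified Lean document; each statement's English description precedes it below -/
import Mathlib

section
/- Let F : ℝ⁴ → ℝ³ be a linear map of rank 3 such that every nonzero vector v ∈ ker F satisfies η(v,v) < 0. Then every root in ℂ of the characteristic polynomial of the Cauchy–Green operator 𝔠 = Fᵗ ∘ F is a nonnegative real number. -/
open scoped BigOperators

noncomputable section

/-- The Minkowski bilinear form on `ℝ⁴`: `η(v,w) = v₁w₁ + v₂w₂ + v₃w₃ − v₄w₄`
(the fourth coordinate, index `3`, is timelike). -/
def eta (v w : Fin 4 → ℝ) : ℝ := v 0 * w 0 + v 1 * w 1 + v 2 * w 2 - v 3 * w 3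

/-- The Euclidean inner product on `ℝ³`. -/
def euclid (v w : Fin 3 → ℝ) : ℝ := ∑ i, v i * w i

lemma euclid_comm (v w : Fin 3 → ℝ) : euclid v w = euclid w v := by
  simp [euclid, mul_comm]

lemma euclid_self_nonneg (v : Fin 3 → ℝ) : 0 ≤ euclid v v :=
  Finset.sum_nonneg fun i _ => mul_self_nonneg _

lemma euclid_self_eq_zero {v : Fin 3 → ℝ} (h : euclid v v = 0) : v = 0 := by
  funext i
  have h1 := (Finset.sum_eq_zero_iff_of_nonneg (fun i _ => mul_self_nonneg (v i))).1 h i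
    (Finset.mem_univ i)
  simpa using mul_self_eq_zero.1 h1

open Polynomial Matrix in
lemma exists_eigenvector (c : (Fin 4 → ℝ) →ₗ[ℝ] (Fin 4 → ℝ)) (z : ℂ)
    (h : Polynomial.eval₂ (algebraMap ℝ ℂ) z (LinearMap.charpoly c) = 0) :
    ∃ u : Fin 4 → ℂ, u ≠ 0 ∧
      ∀ i, ∑ j, ((LinearMap.toMatrix' c) i j : ℂ) * u j = z * u i := by
  set M := LinearMap.toMatrix' c with hM
  have hcp : c.charpoly = M.charpoly := by
    rw [hM, ← LinearMap.toMatrix_eq_toMatrix', LinearMap.charpoly_toMatrix]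
  rw [hcp, eval₂_eq_eval_map, ← Matrix.charpoly_map] at h
  have h2 : ((charmatrix (M.map (algebraMap ℝ ℂ))).map (evalRingHom z))
      = z • 1 - M.map (algebraMap ℝ ℂ) := by
    ext i j
    by_cases hij : i = j <;>
      simp [Matrix.charmatrix_apply, hij, Matrix.one_apply, Matrix.smul_apply,
        Matrix.sub_apply]
  have hdet : ((M.map (algebraMap ℝ ℂ)) - z • 1).det = 0 := by
    rw [Matrix.charpoly, ← coe_evalRingHom, RingHom.map_det] at h
    have h3 : ((evalRingHom z).mapMatrix (charmatrix (M.map (algebraMap ℝ ℂ))))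
        = z • 1 - M.map (algebraMap ℝ ℂ) := h2
    rw [h3] at h
    rw [← neg_sub, det_neg, h, mul_zero]
  obtain ⟨u, hu0, hu⟩ := (Matrix.exists_mulVec_eq_zero_iff).2 hdet
  refine ⟨u, hu0, fun i => ?_⟩
  have h4 := congrFun hu i
  simp only [Matrix.mulVec, dotProduct, Matrix.sub_apply, Matrix.smul_apply, Matrix.one_apply,
    Matrix.map_apply, Pi.zero_apply, sub_mul] at h4
  rw [Finset.sum_sub_distrib, sub_eq_zero] at h4
  simp only [Complex.coe_algebraMap] at h4
  rw [h4]
  simp [Finset.mul_sum, smul_eq_mul, mul_ite, mul_comm]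

lemma no_two_timelike (w v : Fin 4 → ℝ)
    (hw : w 0 * w 0 + w 1 * w 1 + w 2 * w 2 - w 3 * w 3 < 0)
    (hv : v 0 * v 0 + v 1 * v 1 + v 2 * v 2 - v 3 * v 3 < 0)
    (hwv : w 0 * v 0 + w 1 * v 1 + w 2 * v 2 - w 3 * v 3 = 0) : False := by
  have hS : 0 ≤ w 0 * w 0 + w 1 * w 1 + w 2 * w 2 :=
    add_nonneg (add_nonneg (mul_self_nonneg _) (mul_self_nonneg _)) (mul_self_nonneg _)
  have hT : 0 ≤ v 0 * v 0 + v 1 * v 1 + v 2 * v 2 :=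
    add_nonneg (add_nonneg (mul_self_nonneg _) (mul_self_nonneg _)) (mul_self_nonneg _)
  have hP : 0 < w 3 * w 3 - (w 0 * w 0 + w 1 * w 1 + w 2 * w 2) := by linarith
  have hQ : 0 < v 3 * v 3 - (v 0 * v 0 + v 1 * v 1 + v 2 * v 2) := by linarith
  have hR2 : (w 0 * v 0 + w 1 * v 1 + w 2 * v 2) ^ 2 = (w 3 * v 3) ^ 2 := by
    have : w 0 * v 0 + w 1 * v 1 + w 2 * v 2 = w 3 * v 3 := by linarith
    rw [this]
  nlinarith [sq_nonneg (w 0 * v 1 - w 1 * v 0), sq_nonneg (w 0 * v 2 - w 2 * v 0),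
    sq_nonneg (w 1 * v 2 - w 2 * v 1), hR2,
    mul_nonneg hP.le hT, mul_nonneg hS hQ.le, mul_pos hP hQ]

/-- every complex root of the characteristic polynomial of the
Cauchy–Green operator `𝔠 = Fᵗ ∘ F` is a nonnegative real number. -/
theorem statement0
    (F : (Fin 4 → ℝ) →ₗ[ℝ] (Fin 3 → ℝ)) (Ft : (Fin 3 → ℝ) →ₗ[ℝ] (Fin 4 → ℝ))
    (hadj : ∀ (v : Fin 4 → ℝ) (w : Fin 3 → ℝ), euclid (F v) w = eta v (Ft w))
    (hrank : Module.finrank ℝ (LinearMap.range F) = 3)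
    (hker : ∀ v ∈ LinearMap.ker F, v ≠ 0 → eta v v < 0) :
    ∀ z : ℂ,
      Polynomial.eval₂ (algebraMap ℝ ℂ) z (LinearMap.charpoly (Ft ∘ₗ F)) = 0 →
      ∃ r : ℝ, 0 ≤ r ∧ z = (r : ℂ) := by
  intro z hz
  set c : (Fin 4 → ℝ) →ₗ[ℝ] (Fin 4 → ℝ) := Ft ∘ₗ F with hc
  have hcv : ∀ v : Fin 4 → ℝ, c v = Ft (F v) := fun v => rfl
  -- symmetry and positivity of c with respect to eta
  have hce : ∀ v w : Fin 4 → ℝ, eta v (c w) = euclid (F v) (F w) := by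
    intro v w; rw [hadj v (F w)]; rfl
  have hsym : ∀ v w : Fin 4 → ℝ, eta v (c w) = eta w (c v) := by
    intro v w; rw [hce, hce, euclid_comm]
  -- a nonzero kernel vector
  have hkerdim : Module.finrank ℝ (LinearMap.ker F) = 1 := by
    have h1 := LinearMap.finrank_range_add_finrank_ker F
    have h2 : Module.finrank ℝ (Fin 4 → ℝ) = 4 := by simp
    omega
  have hkerne : LinearMap.ker F ≠ ⊥ := by
    intro h; rw [h] at hkerdim; simp at hkerdim
  obtain ⟨v₀, hv₀mem, hv₀ne⟩ := Submodule.exists_mem_ne_zero_of_ne_bot hkerne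
  have hv₀ : eta v₀ v₀ < 0 := hker v₀ hv₀mem hv₀ne
  have hFv₀ : F v₀ = 0 := hv₀mem
  -- the eigenvector
  obtain ⟨u, hu0, hu⟩ := exists_eigenvector c z hz
  set M := LinearMap.toMatrix' c with hM
  have hMc : ∀ (v : Fin 4 → ℝ) (i : Fin 4), ∑ j, M i j * v j = c v i := by
    intro v i
    have : Matrix.toLin' M v = c v := by rw [hM, Matrix.toLin'_toMatrix']
    have h2 := congrFun this i
    simpa [Matrix.toLin'_apply, Matrix.mulVec, dotProduct] using h2
  set a : Fin 4 → ℝ := fun i => (u i).re with ha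
  set b : Fin 4 → ℝ := fun i => (u i).im with hb
  set x : ℝ := z.re with hx
  set y : ℝ := z.im with hy
  -- real and imaginary parts of the eigenvalue equation
  have hca : ∀ i, c a i = x * a i - y * b i := by
    intro i
    have h1 := congrArg Complex.re (hu i)
    rw [Complex.re_sum] at h1
    have h2 : ∀ j, ((M i j : ℂ) * u j).re = M i j * a j := by
      intro j; simp [Complex.mul_re, ha]
    rw [Finset.sum_congr rfl (fun j _ => h2 j)] at h1
    rw [← hMc a i, h1]
    simp [Complex.mul_re, ha, hb, hx, hy]
  have hcb : ∀ i, c b i = x * b i + y * a i := by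
    intro i
    have h1 := congrArg Complex.im (hu i)
    rw [Complex.im_sum] at h1
    have h2 : ∀ j, ((M i j : ℂ) * u j).im = M i j * b j := by
      intro j; simp [Complex.mul_im, hb]
    rw [Finset.sum_congr rfl (fun j _ => h2 j)] at h1
    rw [← hMc b i, h1]
    simp [Complex.mul_im, ha, hb, hx, hy]
  have hcaf : c a = fun i => x * a i - y * b i := funext hca
  have hcbf : c b = fun i => x * b i + y * a i := funext hcb
  set p : ℝ := eta a a with hp
  set q : ℝ := eta b b with hq
  set r : ℝ := eta a b with hr
  have heta_ab : eta b a = r := by simp [eta, hr]; ring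
  have hA : eta a (c a) = x * p - y * r := by
    rw [hcaf, hp, hr]; simp only [eta]; ring
  have hB : eta b (c b) = x * q + y * r := by
    rw [hcbf, hq, hr]; simp only [eta]; ring
  have hC1 : eta a (c b) = x * r + y * p := by
    rw [hcbf, hr, hp]; simp only [eta]; ring
  have hC2 : eta b (c a) = x * r - y * q := by
    rw [hcaf, hr, hq]; simp only [eta]; ring
  have hy_pq : y * (p + q) = 0 := by
    have hs := hsym a b
    rw [hC1, hC2] at hs
    linear_combination hs
  have hApos : 0 ≤ eta a (c a) := by rw [hce]; exact euclid_self_nonneg _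
  have hBpos : 0 ≤ eta b (c b) := by rw [hce]; exact euclid_self_nonneg _
  have hab_ne : a ≠ 0 ∨ b ≠ 0 := by
    by_contra h
    push_neg at h
    apply hu0
    funext i
    have h1 : a i = 0 := by rw [h.1]; rfl
    have h2 : b i = 0 := by rw [h.2]; rfl
    exact Complex.ext h1 h2
  by_cases hy0 : y = 0
  · -- z is real, equal to x
    by_cases hx0 : 0 ≤ x
    · exact ⟨x, hx0, Complex.ext rfl hy0⟩
    push_neg at hx0
    exfalso
    -- get a real eigenvector w
    obtain ⟨w, hwne, hw⟩ : ∃ w : Fin 4 → ℝ, w ≠ 0 ∧ ∀ i, c w i = x * w i := by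
      rcases hab_ne with h | h
      · exact ⟨a, h, fun i => by rw [hca i, hy0]; ring⟩
      · exact ⟨b, h, fun i => by rw [hcb i, hy0]; ring⟩
    have hcwf : c w = fun i => x * w i := funext hw
    have hwcw : eta w (c w) = x * eta w w := by
      simp [hcwf, eta]; ring
    have hwpos : 0 ≤ eta w (c w) := by rw [hce]; exact euclid_self_nonneg _
    have hww : eta w w < 0 := by
      rcases lt_trichotomy (eta w w) 0 with h | h | h
      · exact h
      · exfalso
        have h1 : eta w (c w) = 0 := by rw [hwcw, h, mul_zero]
        have h2 : F w = 0 := euclid_self_eq_zero (by rw [← hce, h1])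
        have := hker w h2 hwne
        rw [h] at this; exact lt_irrefl 0 this
      · exfalso; nlinarith [hwcw, hwpos]
    have hcv₀ : c v₀ = 0 := by
      rw [hcv, hFv₀, map_zero]
    have hwv : eta w v₀ = 0 := by
      have h1 : eta v₀ (c w) = eta w (c v₀) := hsym v₀ w
      rw [hcv₀] at h1
      have h2 : eta w 0 = 0 := by simp [eta]
      rw [h2, hcwf] at h1
      have h3 : eta v₀ (fun i => x * w i) = x * eta v₀ w := by simp [eta]; ring
      rw [h3] at h1
      have h4 : eta v₀ w = 0 := by
        rcases mul_eq_zero.1 h1 with h | h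
        · exact absurd h (ne_of_lt hx0)
        · exact h
      simp [eta] at h4 ⊢
      linarith [h4]
    -- contradiction: two eta-orthogonal timelike vectors
    simp only [eta] at hww hv₀ hwv
    exact no_two_timelike w v₀ hww hv₀ hwv
  · -- y ≠ 0 : contradiction
    exfalso
    have hpq : p + q = 0 := by
      rcases mul_eq_zero.1 hy_pq with h | h
      · exact absurd h hy0
      · exact h
    have hAB : eta a (c a) + eta b (c b) = 0 := by
      rw [hA, hB]; linear_combination x * hpq
    have hA0 : eta a (c a) = 0 := by linarith
    have hB0 : eta b (c b) = 0 := by linarith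
    have hFa : F a = 0 := euclid_self_eq_zero (by rw [← hce, hA0])
    have hFb : F b = 0 := euclid_self_eq_zero (by rw [← hce, hB0])
    have hple : p ≤ 0 := by
      by_cases h : a = 0
      · rw [hp, h]; simp [eta]
      · exact le_of_lt (hker a hFa h)
    have hqle : q ≤ 0 := by
      by_cases h : b = 0
      · rw [hq, h]; simp [eta]
      · exact le_of_lt (hker b hFb h)
    rcases hab_ne with h | h
    · have : p < 0 := hker a hFa h
      linarith
    · have : q < 0 := hker b hFb h
      linarith
end
end

section
/- Let F : ℝ⁴ → ℝ³ be a linear map of rank 3 such that every nonzero vector v ∈ ker F satisfies η(v,v) < 0, and let 𝔠 = Fᵗ ∘ F. Then ker 𝔠 = ker F is one-dimensional, and every eigenvector v of 𝔠 with eigenvalue λ ≠ 0 satisfies λ > 0 and η(v,v) > 0 (all nonzero eigenvalues are positive with spacelike eigenvectors). -/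
open scoped BigOperators

set_option maxHeartbeats 1000000

noncomputable section

lemma euclid_self (w : Fin 3 → ℝ) : euclid w w = w 0 ^ 2 + w 1 ^ 2 + w 2 ^ 2 := by
  simp [euclid, Fin.sum_univ_three]; ring

lemma euclid_self_pos (w : Fin 3 → ℝ) (hw : w ≠ 0) : 0 < euclid w w := by
  rw [euclid_self]
  by_contra h
  push_neg at h
  have h0 : w 0 = 0 := by nlinarith [sq_nonneg (w 0), sq_nonneg (w 1), sq_nonneg (w 2)]
  have h1 : w 1 = 0 := by nlinarith [sq_nonneg (w 0), sq_nonneg (w 1), sq_nonneg (w 2)]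
  have h2 : w 2 = 0 := by nlinarith [sq_nonneg (w 0), sq_nonneg (w 1), sq_nonneg (w 2)]
  apply hw
  funext i
  fin_cases i
  · simpa using h0
  · simpa using h1
  · simpa using h2

/-- `ker 𝔠 = ker F` is one-dimensional, and every eigenvector
of `𝔠 = Fᵗ ∘ F` with nonzero eigenvalue `λ` satisfies `λ > 0` and is spacelike. -/
theorem statement2
    (F : (Fin 4 → ℝ) →ₗ[ℝ] (Fin 3 → ℝ)) (Ft : (Fin 3 → ℝ) →ₗ[ℝ] (Fin 4 → ℝ))
    (hadj : ∀ (v : Fin 4 → ℝ) (w : Fin 3 → ℝ), euclid (F v) w = eta v (Ft w))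
    (hrank : Module.finrank ℝ (LinearMap.range F) = 3)
    (hker : ∀ v ∈ LinearMap.ker F, v ≠ 0 → eta v v < 0) :
    LinearMap.ker (Ft ∘ₗ F) = LinearMap.ker F ∧
    Module.finrank ℝ (LinearMap.ker F) = 1 ∧
    ∀ (lam : ℝ) (v : Fin 4 → ℝ), v ≠ 0 → (Ft ∘ₗ F) v = lam • v → lam ≠ 0 →
      0 < lam ∧ 0 < eta v v := by
  have hkereq : LinearMap.ker (Ft ∘ₗ F) = LinearMap.ker F := by
    ext v
    simp only [LinearMap.mem_ker, LinearMap.comp_apply]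
    constructor
    · intro h
      by_contra hFv
      have h1 : euclid (F v) (F v) = eta v (Ft (F v)) := hadj v (F v)
      rw [h] at h1
      have h2 : eta v 0 = 0 := by simp [eta]
      have := euclid_self_pos (F v) hFv
      rw [h1, h2] at this
      exact lt_irrefl 0 this
    · intro h; rw [h]; exact map_zero Ft
  have hdim : Module.finrank ℝ (LinearMap.ker F) = 1 := by
    have := LinearMap.finrank_range_add_finrank_ker F
    simp [Module.finrank_fintype_fun_eq_card] at this
    omega
  refine ⟨hkereq, hdim, ?_⟩
  intro lam v hv heig hlam
  -- pick a nonzero kernel vector k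
  have hnt : Nontrivial (LinearMap.ker F) := by
    apply Module.nontrivial_of_finrank_pos (R := ℝ)
    omega
  obtain ⟨k, hk0⟩ := exists_ne (0 : LinearMap.ker F)
  have hkmem : (k : Fin 4 → ℝ) ∈ LinearMap.ker F := k.2
  have hkne : (k : Fin 4 → ℝ) ≠ 0 := fun h => hk0 (Subtype.ext h)
  have hkk : eta k k < 0 := hker k hkmem hkne
  have hFk : F k = 0 := hkmem
  -- F v ≠ 0
  have hFv : F v ≠ 0 := by
    intro h
    have : Ft (F v) = lam • v := heig
    rw [h, map_zero] at this
    rcases smul_eq_zero.mp this.symm with h' | h'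
    · exact hlam h'
    · exact hv h' 
  -- euclid (F v) (F v) = lam * eta v v
  have hkey : euclid (F v) (F v) = lam * eta v v := by
    have h1 := hadj v (F v)
    have h2 : Ft (F v) = lam • v := heig
    rw [h2] at h1
    rw [h1]
    simp [eta, Pi.smul_apply, smul_eq_mul]
    ring
  have hpos : 0 < lam * eta v v := hkey ▸ euclid_self_pos (F v) hFv
  -- eta k v = 0
  have horth : eta k v = 0 := by
    have h1 := hadj k (F v)
    rw [hFk] at h1
    have h2 : euclid (0 : Fin 3 → ℝ) (F v) = 0 := by simp [euclid]
    have h3 : Ft (F v) = lam • v := heig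
    rw [h2, h3] at h1
    have : 0 = lam * eta k v := by
      rw [h1]; simp [eta, Pi.smul_apply, smul_eq_mul]; ring
    rcases mul_eq_zero.mp this.symm with h | h
    · exact absurd h hlam
    · exact h
  -- lam > 0
  have hlampos : 0 < lam := by
    rcases lt_trichotomy lam 0 with h | h | h
    · exfalso
      have hvv : eta v v < 0 := by nlinarith
      -- Cauchy-Schwarz contradiction
      have e1 : eta k k < 0 := hkk
      have e2 : eta v v < 0 := hvv
      have e3 : eta k v = 0 := horth
      simp only [eta] at e1 e2 e3
      obtain ⟨k0, k1, k2, k3, hk0', hk1', hk2', hk3'⟩ :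
          ∃ a b c d : ℝ, (k : Fin 4 → ℝ) 0 = a ∧ (k : Fin 4 → ℝ) 1 = b ∧
            (k : Fin 4 → ℝ) 2 = c ∧ (k : Fin 4 → ℝ) 3 = d := ⟨_, _, _, _, rfl, rfl, rfl, rfl⟩
      obtain ⟨v0, v1, v2, v3, hv0', hv1', hv2', hv3'⟩ :
          ∃ a b c d : ℝ, v 0 = a ∧ v 1 = b ∧ v 2 = c ∧ v 3 = d := ⟨_, _, _, _, rfl, rfl, rfl, rfl⟩
      rw [hk0', hk1', hk2', hk3'] at e1 e3
      rw [hv0', hv1', hv2', hv3'] at e2 e3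
      have hSk : (0:ℝ) ≤ k0^2 + k1^2 + k2^2 := by positivity
      have hSv : (0:ℝ) ≤ v0^2 + v1^2 + v2^2 := by positivity
      have hk3 : k0^2 + k1^2 + k2^2 < k3^2 := by nlinarith [e1]
      have hv3 : v0^2 + v1^2 + v2^2 < v3^2 := by nlinarith [e2]
      have hprod : (k0^2 + k1^2 + k2^2) * (v0^2 + v1^2 + v2^2) < k3^2 * v3^2 :=
        mul_lt_mul'' hk3 hv3 hSk hSv
      have hlag : (k0*v0 + k1*v1 + k2*v2)^2 ≤ (k0^2 + k1^2 + k2^2) * (v0^2 + v1^2 + v2^2) := by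
        nlinarith [sq_nonneg (k0*v1 - k1*v0), sq_nonneg (k0*v2 - k2*v0), sq_nonneg (k1*v2 - k2*v1)]
      have heq : k0*v0 + k1*v1 + k2*v2 = k3*v3 := by linarith
      rw [heq] at hlag
      nlinarith [hprod, hlag]
    · exact absurd h hlam
    · exact h
  exact ⟨hlampos, by nlinarith⟩
end
end

section
/- Let F : ℝ⁴ → ℝ³ be a linear map whose kernel is spanned by a vector U with η(U,U) = −1 and whose rank is 3. Set 𝔠 = Fᵗ ∘ F, χ₁ = (tr 𝔠)·id − 𝔠, σ₂ = ½((tr 𝔠)² − tr(𝔠²)), χ₂ = σ₂·id − 𝔠 ∘ χ₁, σ₃ = (1/3)·tr(𝔠 ∘ χ₂), and ω(X) = η(U,X). Then σ₃ > 0, and for every real number k and all X, Y ∈ ℝ⁴: (1/2)σ₃ᵏ·η(X,Y) − k·σ₃^{k−1}·⟨F(χ₂ X), F Y⟩ = −((2k−1)/2)·σ₃ᵏ·( η(X,Y) + ω(X)·ω(Y) ) − (1/2)·σ₃ᵏ·ω(X)·ω(Y). (This is the pointwise statement that the σ₃ᵏ-stress-energy tensor has the perfect fluid form with equation of state p = (2k−1)ρ,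 ρ = σ₃ᵏ.) -/
open scoped BigOperators

noncomputable section

def CG (F : (Fin 4 → ℝ) →ₗ[ℝ] (Fin 3 → ℝ)) (Ft : (Fin 3 → ℝ) →ₗ[ℝ] (Fin 4 → ℝ)) :
    (Fin 4 → ℝ) →ₗ[ℝ] (Fin 4 → ℝ) := Ft ∘ₗ F

def trE (c : (Fin 4 → ℝ) →ₗ[ℝ] (Fin 4 → ℝ)) : ℝ := LinearMap.trace ℝ (Fin 4 → ℝ) c

def chi1 (F : (Fin 4 → ℝ) →ₗ[ℝ] (Fin 3 → ℝ)) (Ft : (Fin 3 → ℝ) →ₗ[ℝ] (Fin 4 → ℝ)) :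
    (Fin 4 → ℝ) →ₗ[ℝ] (Fin 4 → ℝ) :=
  trE (CG F Ft) • LinearMap.id - CG F Ft

def sigma2 (F : (Fin 4 → ℝ) →ₗ[ℝ] (Fin 3 → ℝ)) (Ft : (Fin 3 → ℝ) →ₗ[ℝ] (Fin 4 → ℝ)) : ℝ :=
  ((trE (CG F Ft)) ^ 2 - trE (CG F Ft ∘ₗ CG F Ft)) / 2

def chi2 (F : (Fin 4 → ℝ) →ₗ[ℝ] (Fin 3 → ℝ)) (Ft : (Fin 3 → ℝ) →ₗ[ℝ] (Fin 4 → ℝ)) :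
    (Fin 4 → ℝ) →ₗ[ℝ] (Fin 4 → ℝ) :=
  sigma2 F Ft • LinearMap.id - CG F Ft ∘ₗ chi1 F Ft

def sigma3 (F : (Fin 4 → ℝ) →ₗ[ℝ] (Fin 3 → ℝ)) (Ft : (Fin 3 → ℝ) →ₗ[ℝ] (Fin 4 → ℝ)) : ℝ :=
  trE (CG F Ft ∘ₗ chi2 F Ft) / 3

/-! With `b = F ∘ Fᵗ`, an endomorphism of `ℝ³`, one has `𝔠ⁿ = Fᵗ ∘ bⁿ⁻¹ ∘ F`, so `tr 𝔠ⁿ = tr bⁿ` and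
`σ₃ = det b`. Since `⟨b x, y⟩ = η(Fᵗ x, Fᵗ y)` and `Fᵗ` is injective with image η-orthogonal to the
unit timelike vector `U`, `b` is positive definite and `σ₃ > 0`. Cayley–Hamilton for `b` gives
`F ∘ 𝔠 ∘ χ₂ = σ₃ F`, so `𝔠 χ₂ X - σ₃ X ∈ ker F = ℝ U`; as `𝔠 χ₂ X` is η-orthogonal to `U`, pairing
with `U` yields `𝔠 χ₂ X = σ₃ (X + ω(X) U)`, and the identity follows from
`⟨F χ₂ X, F Y⟩ = η(Y, 𝔠 χ₂ X)`. -/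

namespace Matrix

variable {K : Type*} [Field K] [CharZero K]

theorem det_fin_three_eq_traces (B : Matrix (Fin 3) (Fin 3) K) :
    B.det = (B.trace ^ 3 - 3 * B.trace * (B * B).trace + 2 * (B * B * B).trace) / 6 := by
  simp only [det_fin_three, trace_fin_three, mul_apply, Fin.sum_univ_three]
  ring

theorem cayley_hamilton_fin_three (B : Matrix (Fin 3) (Fin 3) K) :
    B * B * B - B.trace • (B * B) + ((B.trace ^ 2 - (B * B).trace) / 2) • B = B.det • 1 := by
  ext i j
  fin_cases i <;> fin_cases j <;>
    simp [det_fin_three, trace_fin_three, mul_apply, Fin.sum_univ_three] <;> ring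

end Matrix

namespace LinearMap

theorem trace_eq_trace_toMatrix' {R n : Type*} [CommRing R] [Fintype n] [DecidableEq n]
    (f : (n → R) →ₗ[R] n → R) : trace R _ f = (toMatrix' f).trace := by
  rw [trace_eq_matrix_trace R (Pi.basisFun R n), toMatrix_eq_toMatrix']

variable {K : Type*} [Field K] [CharZero K]

theorem det_fin_three_eq_traces (b : (Fin 3 → K) →ₗ[K] Fin 3 → K) :
    LinearMap.det b = (trace K _ b ^ 3 - 3 * trace K _ b * trace K _ (b ∘ₗ b)
      + 2 * trace K _ (b ∘ₗ b ∘ₗ b)) / 6 := by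
  simp only [← det_toMatrix', trace_eq_trace_toMatrix', toMatrix'_comp, ← Matrix.mul_assoc]
  exact Matrix.det_fin_three_eq_traces _

theorem cayley_hamilton_fin_three (b : (Fin 3 → K) →ₗ[K] Fin 3 → K) :
    b ∘ₗ b ∘ₗ b - trace K _ b • (b ∘ₗ b) + ((trace K _ b ^ 2 - trace K _ (b ∘ₗ b)) / 2) • b
      = LinearMap.det b • id := by
  apply toMatrix'.injective
  simp only [map_add, map_sub, map_smul, ← det_toMatrix', trace_eq_trace_toMatrix',
    toMatrix'_comp, toMatrix'_id, ← Matrix.mul_assoc]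
  exact Matrix.cayley_hamilton_fin_three _

theorem det_pos_of_dotProduct_pos {n : Type*} [Fintype n] [DecidableEq n]
    (b : (n → ℝ) →ₗ[ℝ] n → ℝ) (hsymm : ∀ x y, b x ⬝ᵥ y = x ⬝ᵥ b y)
    (hpos : ∀ x, x ≠ 0 → 0 < b x ⬝ᵥ x) : 0 < LinearMap.det b := by
  rw [← det_toMatrix']
  refine (Matrix.PosDef.of_dotProduct_mulVec_pos ?_ fun x hx => ?_).det_pos
  · ext i j
    simpa [toMatrix'_apply, dotProduct_single, single_dotProduct] using
      hsymm (Pi.single i 1) (Pi.single j 1)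
  · simpa only [star_trivial, toMatrix'_mulVec, dotProduct_comm] using hpos x hx

end LinearMap

open LinearMap (trace)

section NewtonTensors

variable (F : (Fin 4 → ℝ) →ₗ[ℝ] (Fin 3 → ℝ)) (Ft : (Fin 3 → ℝ) →ₗ[ℝ] (Fin 4 → ℝ))

theorem trE_CG : trE (CG F Ft) = trace ℝ _ (F ∘ₗ Ft) :=
  LinearMap.trace_comp_comm' F Ft

theorem trE_CG_comp_CG : trE (CG F Ft ∘ₗ CG F Ft) = trace ℝ _ ((F ∘ₗ Ft) ∘ₗ (F ∘ₗ Ft)) :=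
  LinearMap.trace_comp_comm' (F ∘ₗ Ft ∘ₗ F) Ft

theorem trE_CG_comp_CG_comp_CG :
    trE (CG F Ft ∘ₗ CG F Ft ∘ₗ CG F Ft)
      = trace ℝ _ ((F ∘ₗ Ft) ∘ₗ (F ∘ₗ Ft) ∘ₗ (F ∘ₗ Ft)) :=
  LinearMap.trace_comp_comm' (F ∘ₗ Ft ∘ₗ F ∘ₗ Ft ∘ₗ F) Ft

theorem sigma2_eq : sigma2 F Ft
    = (trace ℝ _ (F ∘ₗ Ft) ^ 2 - trace ℝ _ ((F ∘ₗ Ft) ∘ₗ (F ∘ₗ Ft))) / 2 := by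
  rw [sigma2, trE_CG, trE_CG_comp_CG]

theorem CG_comp_chi2 : CG F Ft ∘ₗ chi2 F Ft
    = sigma2 F Ft • CG F Ft - trE (CG F Ft) • (CG F Ft ∘ₗ CG F Ft)
      + CG F Ft ∘ₗ CG F Ft ∘ₗ CG F Ft := by
  simp only [chi2, chi1, LinearMap.comp_sub, LinearMap.comp_smul, LinearMap.comp_id]
  abel

theorem sigma3_eq_det : sigma3 F Ft = LinearMap.det (F ∘ₗ Ft) := by
  rw [sigma3, trE, CG_comp_chi2, map_add, map_sub, map_smul, map_smul, ← trE, ← trE, ← trE,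
    trE_CG, trE_CG_comp_CG, trE_CG_comp_CG_comp_CG, sigma2_eq,
    LinearMap.det_fin_three_eq_traces, smul_eq_mul, smul_eq_mul]
  ring

theorem comp_CG_comp_chi2 : F ∘ₗ CG F Ft ∘ₗ chi2 F Ft = sigma3 F Ft • F := by
  have hCH := LinearMap.cayley_hamilton_fin_three (F ∘ₗ Ft)
  calc F ∘ₗ CG F Ft ∘ₗ chi2 F Ft
      = ((F ∘ₗ Ft) ∘ₗ (F ∘ₗ Ft) ∘ₗ (F ∘ₗ Ft) - trace ℝ _ (F ∘ₗ Ft) • ((F ∘ₗ Ft) ∘ₗ (F ∘ₗ Ft))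
          + ((trace ℝ _ (F ∘ₗ Ft) ^ 2 - trace ℝ _ ((F ∘ₗ Ft) ∘ₗ (F ∘ₗ Ft))) / 2) • (F ∘ₗ Ft))
          ∘ₗ F := by
        rw [CG_comp_chi2, ← sigma2_eq, ← trE_CG]
        simp only [CG, LinearMap.comp_add, LinearMap.comp_sub, LinearMap.comp_smul,
          LinearMap.add_comp, LinearMap.sub_comp, LinearMap.smul_comp, LinearMap.comp_assoc]
        abel
    _ = sigma3 F Ft • F := by
        rw [hCH, sigma3_eq_det, LinearMap.smul_comp, LinearMap.id_comp]

end NewtonTensors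

theorem euclid_eq_dotProduct (v w : Fin 3 → ℝ) : euclid v w = v ⬝ᵥ w := rfl

theorem eta_comm (v w : Fin 4 → ℝ) : eta v w = eta w v := by
  simp only [eta]
  ring

theorem eta_self_pos_of_eta_eq_zero {U x : Fin 4 → ℝ} (hU : eta U U = -1) (hx : eta U x = 0)
    (hx0 : x ≠ 0) : 0 < eta x x := by
  simp only [eta] at *
  have lagrange : U 3 ^ 2 * (x 0 * x 0 + x 1 * x 1 + x 2 * x 2 - x 3 * x 3)
      = x 0 ^ 2 + x 1 ^ 2 + x 2 ^ 2 + ((U 0 * x 1 - U 1 * x 0) ^ 2 + (U 0 * x 2 - U 2 * x 0) ^ 2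
        + (U 1 * x 2 - U 2 * x 1) ^ 2) := by
    linear_combination (-(x 0 ^ 2 + x 1 ^ 2 + x 2 ^ 2)) * hU
      + (U 0 * x 0 + U 1 * x 1 + U 2 * x 2 + U 3 * x 3) * hx
  by_contra hle
  have hspatial : x 0 ^ 2 + x 1 ^ 2 + x 2 ^ 2 ≤ 0 := by nlinarith [sq_nonneg (U 3)]
  have h0 : x 0 = 0 := by nlinarith [sq_nonneg (x 1), sq_nonneg (x 2)]
  have h1 : x 1 = 0 := by nlinarith [sq_nonneg (x 0), sq_nonneg (x 2)]
  have h2 : x 2 = 0 := by nlinarith [sq_nonneg (x 0), sq_nonneg (x 1)]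
  have h3 : x 3 = 0 := by
    have hU3 : U 3 ≠ 0 := by
      rintro hU3
      nlinarith [sq_nonneg (U 0), sq_nonneg (U 1), sq_nonneg (U 2)]
    simpa [h0, h1, h2, hU3] using hx
  exact hx0 (funext fun i => by fin_cases i <;> assumption)

theorem eq_add_eta_smul_of_map_eq {F : (Fin 4 → ℝ) →ₗ[ℝ] (Fin 3 → ℝ)} {U : Fin 4 → ℝ}
    (hker : LinearMap.ker F = Submodule.span ℝ {U}) (hU : eta U U = -1) {W X : Fin 4 → ℝ}
    (hW : eta U W = 0) (hWX : F W = F X) : W = X + eta U X • U := by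
  have hmem : W - X ∈ Submodule.span ℝ {U} := by
    rw [← hker, LinearMap.mem_ker, map_sub, hWX, sub_self]
  obtain ⟨r, hr⟩ := Submodule.mem_span_singleton.mp hmem
  have hr' : r = eta U X := by
    have hηr := congrArg (eta U) hr
    simp only [eta, Pi.smul_apply, Pi.sub_apply, smul_eq_mul] at hηr hW hU ⊢
    linear_combination -hηr + r * hU - hW
  rw [← hr', hr]
  abel

section Adjoint

variable {F : (Fin 4 → ℝ) →ₗ[ℝ] (Fin 3 → ℝ)} {Ft : (Fin 3 → ℝ) →ₗ[ℝ] (Fin 4 → ℝ)}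
  (hadj : ∀ (v : Fin 4 → ℝ) (w : Fin 3 → ℝ), euclid (F v) w = eta v (Ft w)) {U : Fin 4 → ℝ}
include hadj

theorem eta_apply_adjoint_eq_zero (hFU : F U = 0) (w : Fin 3 → ℝ) :
    eta U (Ft w) = 0 := by
  rw [← hadj, hFU, euclid_eq_dotProduct, zero_dotProduct]

theorem adjoint_injective (hF : Function.Surjective F) : Function.Injective Ft := by
  refine (injective_iff_map_eq_zero Ft).mpr fun w hw => ?_
  obtain ⟨v, rfl⟩ := hF w
  have hself : euclid (F v) (F v) = 0 := by simpa [hw, eta] using hadj v (F v)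
  exact dotProduct_self_eq_zero.mp hself

theorem sigma3_pos (hFU : F U = 0) (hU : eta U U = -1)
    (hF : Function.Surjective F) : 0 < sigma3 F Ft := by
  have hform : ∀ x y, (F ∘ₗ Ft) x ⬝ᵥ y = eta (Ft x) (Ft y) := fun x y => hadj (Ft x) y
  rw [sigma3_eq_det]
  refine LinearMap.det_pos_of_dotProduct_pos _ (fun x y => ?_) fun x hx => ?_
  · rw [hform, dotProduct_comm, hform, eta_comm]
  · rw [hform]
    exact eta_self_pos_of_eta_eq_zero hU (eta_apply_adjoint_eq_zero hadj hFU x)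
      ((adjoint_injective hadj hF).ne_iff' (map_zero Ft) |>.mpr hx)

theorem CG_chi2_apply (hker : LinearMap.ker F = Submodule.span ℝ {U}) (hU : eta U U = -1)
    (X : Fin 4 → ℝ) :
    CG F Ft (chi2 F Ft X) = sigma3 F Ft • X + eta U (sigma3 F Ft • X) • U := by
  have hFU : F U = 0 := LinearMap.mem_ker.mp (hker ▸ Submodule.mem_span_singleton_self U)
  refine eq_add_eta_smul_of_map_eq hker hU (eta_apply_adjoint_eq_zero hadj hFU _) ?_
  rw [map_smul]
  exact LinearMap.congr_fun (comp_CG_comp_chi2 F Ft) X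

theorem euclid_map_chi2_map (hker : LinearMap.ker F = Submodule.span ℝ {U})
    (hU : eta U U = -1) (X Y : Fin 4 → ℝ) :
    euclid (F (chi2 F Ft X)) (F Y) = sigma3 F Ft * (eta X Y + eta U X * eta U Y) := by
  rw [euclid_eq_dotProduct, dotProduct_comm, ← euclid_eq_dotProduct, hadj]
  change eta Y (CG F Ft (chi2 F Ft X)) = _
  rw [CG_chi2_apply hadj hker hU]
  simp only [eta, Pi.add_apply, Pi.smul_apply, smul_eq_mul]
  ring

end Adjoint

/-- `σ₃ > 0`, and the σ₃ᵏ-stress-energy tensor of `F` has the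
perfect fluid form with equation of state `p = (2k−1)ρ`, `ρ = σ₃ᵏ`. -/
theorem statement4
    (F : (Fin 4 → ℝ) →ₗ[ℝ] (Fin 3 → ℝ)) (Ft : (Fin 3 → ℝ) →ₗ[ℝ] (Fin 4 → ℝ))
    (hadj : ∀ (v : Fin 4 → ℝ) (w : Fin 3 → ℝ), euclid (F v) w = eta v (Ft w))
    (U : Fin 4 → ℝ)
    (hker : LinearMap.ker F = Submodule.span ℝ {U})
    (hU : eta U U = -1)
    (hrank : Module.finrank ℝ (LinearMap.range F) = 3) :
    0 < sigma3 F Ft ∧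
    ∀ (k : ℝ) (X Y : Fin 4 → ℝ),
      (1 / 2) * sigma3 F Ft ^ k * eta X Y
          - k * sigma3 F Ft ^ (k - 1) * euclid (F (chi2 F Ft X)) (F Y)
        = -((2 * k - 1) / 2) * sigma3 F Ft ^ k * (eta X Y + eta U X * eta U Y)
          - (1 / 2) * sigma3 F Ft ^ k * (eta U X * eta U Y) := by
  have hFU : F U = 0 := LinearMap.mem_ker.mp (hker ▸ Submodule.mem_span_singleton_self U)
  have hF : Function.Surjective F := LinearMap.range_eq_top.mp <|
    Submodule.eq_top_of_finrank_eq (hrank.trans (Module.finrank_fin_fun ℝ).symm)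
  have hσ : 0 < sigma3 F Ft := sigma3_pos hadj hFU hU hF
  refine ⟨hσ, fun k X Y => ?_⟩
  rw [euclid_map_chi2_map hadj hker hU, Real.rpow_sub_one hσ.ne']
  field_simp
  ring
end
end
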